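/- Let X ~ N(μ_k, σ_k² I) on ℝ^d and let L_i be the isotropic Gaussian density with mean μ_i, covariance σ_i² I. Given positive priors P'(X_k) and P'(X_s), if ‖μ_k - μ_i‖²/(σ_k² + σ_i²) ≥ 2·ln(P'(X_s)/P'(X_k)) + d·ln(2σ_k²/(σ_k²+σ_i²)), then P'(X_k)·E[L_k(X)] ≥ P'(X_s)·E[L_i(X)]. -/

import Mathlib

/-!
Completing the square, `L_i · L_k` is a constant times an unnormalised Gaussian in `x`, which
gives the convolution identity
`∫ L_i L_k = (2π(σ_i² + σ_k²))^(-d/2) · exp(-‖μ_k - μ_i‖² / (2(σ_i² + σ_k²)))`.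
Both expectations are therefore explicit; their common factor `(2π(σ_k² + σ_i²))^(-d/2)` cancels,
and after taking logarithms the claimed inequality is exactly the separability condition.
-/

open MeasureTheory Real

/-- Density of the isotropic Gaussian `N(μ, σ² I)` on `ℝ^d`. -/
noncomputable def gaussDensity (d : ℕ) (μ : EuclideanSpace ℝ (Fin d)) (σ : ℝ) :
    EuclideanSpace ℝ (Fin d) → ℝ :=
  fun x => (2 * π * σ ^ 2) ^ (-(d : ℝ) / 2) * Real.exp (-‖x - μ‖ ^ 2 / (2 * σ ^ 2))

theorem mul_norm_sub_sq_add_mul_norm_sub_sq {E : Type*} [NormedAddCommGroup E]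
    [InnerProductSpace ℝ E] {a b : ℝ} (hab : a + b ≠ 0) (x u v : E) :
    a * ‖x - u‖ ^ 2 + b * ‖x - v‖ ^ 2 =
      (a + b) * ‖x - (a + b)⁻¹ • (a • u + b • v)‖ ^ 2 + a * b / (a + b) * ‖u - v‖ ^ 2 := by
  simp only [norm_sub_sq_real, norm_add_sq_real, norm_smul, real_inner_smul_right,
    real_inner_smul_left, inner_add_right, mul_pow, Real.norm_eq_abs, sq_abs]
  field_simp
  ring

section

variable {d : ℕ} {σ₁ σ₂ : ℝ}

theorem gaussDensity_mul_gaussDensity (hσ₁ : σ₁ ≠ 0) (hσ₂ : σ₂ ≠ 0)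
    (μ₁ μ₂ x : EuclideanSpace ℝ (Fin d)) :
    gaussDensity d μ₁ σ₁ x * gaussDensity d μ₂ σ₂ x =
      (2 * π * σ₁ ^ 2) ^ (-(d : ℝ) / 2) * (2 * π * σ₂ ^ 2) ^ (-(d : ℝ) / 2) *
        Real.exp (-‖μ₁ - μ₂‖ ^ 2 / (2 * (σ₁ ^ 2 + σ₂ ^ 2))) *
        Real.exp (-((2 * σ₁ ^ 2)⁻¹ + (2 * σ₂ ^ 2)⁻¹) *
          ‖x - ((2 * σ₁ ^ 2)⁻¹ + (2 * σ₂ ^ 2)⁻¹)⁻¹ •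
            ((2 * σ₁ ^ 2)⁻¹ • μ₁ + (2 * σ₂ ^ 2)⁻¹ • μ₂)‖ ^ 2) := by
  have hsum : (2 * σ₁ ^ 2)⁻¹ + (2 * σ₂ ^ 2)⁻¹ ≠ 0 := by positivity
  have hexponent := mul_norm_sub_sq_add_mul_norm_sub_sq hsum x μ₁ μ₂
  have hweight : (2 * σ₁ ^ 2)⁻¹ * (2 * σ₂ ^ 2)⁻¹ / ((2 * σ₁ ^ 2)⁻¹ + (2 * σ₂ ^ 2)⁻¹) =
      (2 * (σ₁ ^ 2 + σ₂ ^ 2))⁻¹ := by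
    field_simp; ring
  simp only [gaussDensity]
  rw [mul_mul_mul_comm, ← Real.exp_add, mul_assoc _ (Real.exp _), ← Real.exp_add]
  congr 2
  rw [hweight] at hexponent
  linear_combination (-1 : ℝ) * hexponent

theorem integral_gaussDensity_mul_gaussDensity (hσ₁ : σ₁ ≠ 0) (hσ₂ : σ₂ ≠ 0)
    (μ₁ μ₂ : EuclideanSpace ℝ (Fin d)) :
    ∫ x, gaussDensity d μ₁ σ₁ x * gaussDensity d μ₂ σ₂ x =
      (2 * π * (σ₁ ^ 2 + σ₂ ^ 2)) ^ (-(d : ℝ) / 2) *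
        Real.exp (-‖μ₁ - μ₂‖ ^ 2 / (2 * (σ₁ ^ 2 + σ₂ ^ 2))) := by
  set a := (2 * σ₁ ^ 2)⁻¹ + (2 * σ₂ ^ 2)⁻¹ with ha
  have ha0 : 0 < a := by positivity
  simp_rw [gaussDensity_mul_gaussDensity hσ₁ hσ₂ μ₁ μ₂]
  rw [integral_const_mul, integral_sub_right_eq_self (fun y => Real.exp (-a * ‖y‖ ^ 2)),
    GaussianFourier.integral_rexp_neg_mul_sq_norm ha0, finrank_euclideanSpace_fin]
  have hconst : (2 * π * σ₁ ^ 2) ^ (-(d : ℝ) / 2) * (2 * π * σ₂ ^ 2) ^ (-(d : ℝ) / 2) *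
      (π / a) ^ ((d : ℝ) / 2) = (2 * π * (σ₁ ^ 2 + σ₂ ^ 2)) ^ (-(d : ℝ) / 2) := by
    rw [← inv_div a π, Real.inv_rpow (by positivity), ← Real.rpow_neg (by positivity), neg_div,
      ← Real.mul_rpow (by positivity) (by positivity),
      ← Real.mul_rpow (by positivity) (by positivity)]
    congr 1
    rw [ha]
    field_simp
    ring
  rw [← hconst]
  ring

end

theorem bayes_known_class_general (d : ℕ)
    (μk μi : EuclideanSpace ℝ (Fin d)) (σk σi : ℝ) (hσk : 0 < σk) (hσi : 0 < σi)
    (Pk Ps : ℝ) (hPk : 0 < Pk) (hPs : 0 < Ps)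
    (hsep : ‖μk - μi‖ ^ 2 / (σk ^ 2 + σi ^ 2) ≥
      2 * Real.log (Ps / Pk) +
        (d : ℝ) * Real.log (2 * σk ^ 2 / (σk ^ 2 + σi ^ 2))) :
    Pk * ∫ x, gaussDensity d μk σk x * gaussDensity d μk σk x ≥
      Ps * ∫ x, gaussDensity d μi σi x * gaussDensity d μk σk x := by
  set S := σk ^ 2 + σi ^ 2
  set r := 2 * σk ^ 2 / S
  have hS : 0 < S := by positivity
  have hr : 0 < r := by positivity
  have hself : 2 * π * (2 * σk ^ 2) = 2 * π * S * r := by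
    simp only [r]; field_simp
  rw [integral_gaussDensity_mul_gaussDensity hσk.ne' hσk.ne',
    integral_gaussDensity_mul_gaussDensity hσi.ne' hσk.ne', add_comm (σi ^ 2), norm_sub_rev μi μk,
    sub_self, norm_zero, zero_pow two_ne_zero, neg_zero, zero_div, exp_zero, mul_one,
    ← two_mul (σk ^ 2), hself, Real.mul_rpow (by positivity) hr.le]
  have hpriors : Ps * Real.exp (-‖μk - μi‖ ^ 2 / (2 * S)) ≤ Pk * r ^ (-(d : ℝ) / 2) := by
    rw [← Real.log_le_log_iff (by positivity) (by positivity), Real.log_mul hPs.ne' (by positivity),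
      Real.log_exp, Real.log_mul hPk.ne' (by positivity), Real.log_rpow hr]
    rw [Real.log_div hPs.ne' hPk.ne'] at hsep
    have : -‖μk - μi‖ ^ 2 / (2 * S) = -(‖μk - μi‖ ^ 2 / S) / 2 := by field_simp
    linarith
  have hC : 0 ≤ (2 * π * S) ^ (-(d : ℝ) / 2) := by positivity
  linarith [mul_le_mul_of_nonneg_left hpriors hC]

/-- Known-class case of Theorem 3.2 (Bayesian classification): with positive priors
`P'(Xₖ)` and `P'(X_s)`, if the separability condition holds then
`P'(Xₖ)·E[Lₖ(X)] ≥ P'(X_s)·E[Lᵢ(X)]` for `X ~ N(μₖ, σₖ² I)`. -/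
theorem bayes_known_class (d : ℕ) (hd : 1 ≤ d)
    (μk μi : EuclideanSpace ℝ (Fin d)) (σk σi : ℝ) (hσk : 0 < σk) (hσi : 0 < σi)
    (Pk Ps : ℝ) (hPk : 0 < Pk) (hPs : 0 < Ps)
    (hsep : ‖μk - μi‖ ^ 2 / (σk ^ 2 + σi ^ 2) ≥
      2 * Real.log (Ps / Pk) +
        (d : ℝ) * Real.log (2 * σk ^ 2 / (σk ^ 2 + σi ^ 2))) :
    Pk * ∫ x, gaussDensity d μk σk x * gaussDensity d μk σk x ≥
      Ps * ∫ x, gaussDensity d μi σi x * gaussDensity d μk σk x :=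
  bayes_known_class_general d μk μi σk σi hσk hσi Pk Ps hPk hPs hsep
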